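/- arXiv:math/0207295 — 4 statements merged into one kernel-verified Lean document; each statement's English description precedes it below -/
import Mathlib

section
/- Let B be a Noetherian domain and P a finitely generated projective right B-module that is a generator of the category of right B-modules. If B' = End_B(P) is also a domain, then P is isomorphic as a right B-module to a right ideal of B. -/
/-! For `q ≠ 0` in `P`, some functional `θ` makes the endomorphism `x ↦ q θ(x)` nonzero, since
otherwise `q` would be killed by the trace ideal `B`. This `θ` is injective: if `θ p = 0`, then
`(q θ) ∘ (p ψ) = (q θ(p)) ψ = 0` for every functional `ψ`, so `p ψ = 0` because `End_B(P)` is a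
domain, and `p` is again killed by the trace ideal. Hence `P ≅ θ(P)`, a right ideal of `B`. -/

open MulOpposite

section RightModule

variable {B : Type*} [Ring B] {P : Type*} [AddCommGroup P] [Module Bᵐᵒᵖ P]

variable (B P) in
def traceIdeal : Submodule Bᵐᵒᵖ B :=
  Submodule.span Bᵐᵒᵖ {x : B | ∃ (θ : P →ₗ[Bᵐᵒᵖ] B) (p : P), θ p = x}

def rankOne (p : P) (ψ : P →ₗ[Bᵐᵒᵖ] B) : Module.End Bᵐᵒᵖ P :=
  ((opLinearEquiv Bᵐᵒᵖ).toLinearMap ∘ₗ ψ).smulRight p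

theorem rankOne_apply (p : P) (ψ : P →ₗ[Bᵐᵒᵖ] B) (x : P) : rankOne p ψ x = op (ψ x) • p := rfl

theorem rankOne_mul_rankOne (p q : P) (θ ψ : P →ₗ[Bᵐᵒᵖ] B) :
    rankOne p θ * rankOne q ψ = rankOne (op (θ q) • p) ψ := by
  ext x
  simp [rankOne_apply, smul_smul]

theorem eq_zero_of_forall_rankOne_eq_zero (htr : traceIdeal B P = ⊤) {p : P}
    (h : ∀ ψ : P →ₗ[Bᵐᵒᵖ] B, rankOne p ψ = 0) : p = 0 := by
  let ann := LinearMap.ker (LinearMap.toSpanSingleton Bᵐᵒᵖ P p ∘ₗ (opLinearEquiv Bᵐᵒᵖ).toLinearMap)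
  have htr_le : traceIdeal B P ≤ ann := by
    rw [traceIdeal, Submodule.span_le]
    rintro _ ⟨ψ, x, rfl⟩
    exact LinearMap.congr_fun (h ψ) x
  have h1 : (1 : B) ∈ ann := htr_le (htr ▸ Submodule.mem_top)
  simpa [ann] using h1

theorem exists_rankOne_ne_zero (htr : traceIdeal B P = ⊤) {p : P} (hp : p ≠ 0) :
    ∃ ψ : P →ₗ[Bᵐᵒᵖ] B, rankOne p ψ ≠ 0 := by
  contrapose! hp
  exact eq_zero_of_forall_rankOne_eq_zero htr hp

theorem injective_of_rankOne_ne_zero [NoZeroDivisors (Module.End Bᵐᵒᵖ P)]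
    (htr : traceIdeal B P = ⊤) {q : P} {θ : P →ₗ[Bᵐᵒᵖ] B} (hθ : rankOne q θ ≠ 0) :
    Function.Injective θ := by
  refine (injective_iff_map_eq_zero θ).mpr fun p hp => eq_zero_of_forall_rankOne_eq_zero htr fun ψ => ?_
  have : rankOne q θ * rankOne p ψ = 0 := by rw [rankOne_mul_rankOne, hp]; simp [rankOne]
  exact (mul_eq_zero.mp this).resolve_left hθ

end RightModule

theorem stmt0_general (B : Type*) [Ring B]
    (P : Type*) [AddCommGroup P] [Module Bᵐᵒᵖ P]
    (hgen : Submodule.span Bᵐᵒᵖ {x : B | ∃ (θ : P →ₗ[Bᵐᵒᵖ] B) (p : P), θ p = x}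
      = (⊤ : Submodule Bᵐᵒᵖ B))
    [IsDomain (Module.End Bᵐᵒᵖ P)] :
    ∃ I : Submodule Bᵐᵒᵖ B, Nonempty (P ≃ₗ[Bᵐᵒᵖ] I) := by
  obtain ⟨q, hq⟩ : ∃ q : P, q ≠ 0 := by
    by_contra! h
    exact one_ne_zero (LinearMap.ext h : (1 : Module.End Bᵐᵒᵖ P) = 0)
  obtain ⟨θ, hθ⟩ := exists_rankOne_ne_zero hgen hq
  exact ⟨LinearMap.range θ, ⟨LinearEquiv.ofInjective θ (injective_of_rankOne_ne_zero hgen hθ)⟩⟩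

/-- let `B` be a Noetherian domain and `P` a finitely generated projective
right `B`-module (formalized as a module over `Bᵐᵒᵖ`) which is a generator of the
category of right `B`-modules (its trace ideal is all of `B`). If `B' = End_B(P)` is a
domain, then `P` is isomorphic as a right `B`-module to a right ideal of `B`. -/
theorem stmt0 (B : Type*) [Ring B] [IsDomain B]
    [IsNoetherianRing B] [IsNoetherianRing Bᵐᵒᵖ]
    (P : Type*) [AddCommGroup P] [Module Bᵐᵒᵖ P]
    [Module.Finite Bᵐᵒᵖ P] [Module.Projective Bᵐᵒᵖ P]
    (hgen : Submodule.span Bᵐᵒᵖ {x : B | ∃ (θ : P →ₗ[Bᵐᵒᵖ] B) (p : P), θ p = x}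
      = (⊤ : Submodule Bᵐᵒᵖ B))
    [IsDomain (Module.End Bᵐᵒᵖ P)] :
    ∃ I : Submodule Bᵐᵒᵖ B, Nonempty (P ≃ₗ[Bᵐᵒᵖ] I) :=
  stmt0_general B P hgen
end

section
/- Let n ≥ 2 and let μ_1, μ_2, ..., μ_r be nonnegative integers and k, l integers with 0 ≤ l ≤ k ≤ n-1, such that (n-1-k) + (k-l) + μ_1 + ... + μ_r = n-1 and Σ_{i=1}^r i·μ_i = n. Then the multinomial coefficient (n-1)! / ((n-1-k)! (k-l)! μ_1! μ_2! ··· μ_r!) is an integer divisible by n-1. -/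
/-!
Write `f = (n-1-k, k-l, μ_1, …, μ_r)`, so the coefficient is the multinomial `M` of `f`, whose
parts add up to `n - 1`. Since `f_j · M = (n-1) · M'`, with `M'` the multinomial of `f` with
`f_j` lowered by one, `(n-1) ∣ f_j · M` for every `j`; hence `n - 1` divides
`(Σ i·μ_i) · M = n · M`. As `n - 1` and `n` are coprime, `(n-1) ∣ M`.
-/

open Finset

namespace Nat

theorem dvd_mul_choose (n k : ℕ) : n ∣ k * n.choose k := by
  rcases k with _ | k
  · simp
  rcases n with _ | n
  · simp
  exact ⟨n.choose k, by rw [mul_comm, ← add_one_mul_choose_eq]⟩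

theorem sum_dvd_mul_multinomial {α : Type*} {s : Finset α} (f : α → ℕ) {j : α} (hj : j ∈ s) :
    (∑ i ∈ s, f i) ∣ f j * multinomial s f := by
  classical
  have hsum : f j + ∑ i ∈ s.erase j, f i = ∑ i ∈ s, f i := add_sum_erase s f hj
  rw [← insert_erase hj, multinomial_insert (notMem_erase j s), ← mul_assoc, hsum,
    sum_insert (notMem_erase j s), hsum]
  exact (dvd_mul_choose _ _).mul_right _

theorem sum_dvd_weighted_sum_mul_multinomial {α : Type*} (s : Finset α) (f w : α → ℕ) :
    (∑ i ∈ s, f i) ∣ (∑ i ∈ s, w i * f i) * multinomial s f := by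
  rw [sum_mul]
  exact dvd_sum fun j hj => mul_assoc (w j) _ _ ▸ (sum_dvd_mul_multinomial f hj).mul_left _

end Nat

theorem stmt5_general (n : ℕ) (hn : 2 ≤ n) (k l r : ℕ)
    (μ : Fin r → ℕ)
    (h1 : (n - 1 - k) + (k - l) + ∑ i, μ i = n - 1)
    (h2 : ∑ i : Fin r, ((i : ℕ) + 1) * μ i = n) :
    ((n - 1) * ((n - 1 - k).factorial * (k - l).factorial * ∏ i, (μ i).factorial))
      ∣ (n - 1).factorial := by
  let f : Fin (r + 2) → ℕ := Fin.cons (n - 1 - k) (Fin.cons (k - l) μ)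
  let w : Fin (r + 2) → ℕ := Fin.cons 0 (Fin.cons 0 fun i => (i : ℕ) + 1)
  have hf_sum : ∑ i, f i = n - 1 := by simp only [f, Fin.sum_cons]; omega
  have hwf_sum : ∑ i, w i * f i = n := by simp [w, f, Fin.sum_univ_succ, h2]
  have hf_prod : ∏ i, (f i).factorial =
      (n - 1 - k).factorial * (k - l).factorial * ∏ i, (μ i).factorial := by
    simp [f, Fin.prod_univ_succ, mul_assoc]
  have hdvd : n - 1 ∣ n * Nat.multinomial univ f := by
    simpa [hf_sum, hwf_sum] using Nat.sum_dvd_weighted_sum_mul_multinomial univ f w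
  have hcop : Nat.Coprime (n - 1) n := by
    obtain ⟨m, rfl⟩ := Nat.exists_eq_add_of_le' (by omega : 1 ≤ n)
    simp
  obtain ⟨c, hc⟩ := hcop.dvd_of_dvd_mul_left hdvd
  have hspec := Nat.multinomial_spec univ f
  rw [hf_prod, hf_sum, hc] at hspec
  exact Dvd.intro c (by rw [← hspec]; ring)

/-- given `n ≥ 2`, integers `0 ≤ l ≤ k ≤ n-1` and nonnegative integers
`μ_1,…,μ_r` with `(n-1-k) + (k-l) + Σ μ_i = n-1` and `Σ i·μ_i = n`, the multinomial
coefficient `(n-1)!/((n-1-k)!(k-l)!μ_1!⋯μ_r!)` is an integer divisible by `n-1`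
(expressed as: `(n-1)·(n-1-k)!(k-l)!∏ μ_i!` divides `(n-1)!`). -/
theorem stmt5 (n : ℕ) (hn : 2 ≤ n) (k l r : ℕ) (hlk : l ≤ k) (hk : k ≤ n - 1)
    (μ : Fin r → ℕ)
    (h1 : (n - 1 - k) + (k - l) + ∑ i, μ i = n - 1)
    (h2 : ∑ i : Fin r, ((i : ℕ) + 1) * μ i = n) :
    ((n - 1) * ((n - 1 - k).factorial * (k - l).factorial * ∏ i, (μ i).factorial))
      ∣ (n - 1).factorial :=
  stmt5_general n hn k l r μ h1 h2
end

section
/- Let n ≥ 3, let f(x) = (x+1)(x+2)···(x+n-1) ∈ ℚ[x], and suppose g_1,...,g_{n-1} ∈ ℚ[x] are nonzero polynomials of degree ≤ n-2 such that f/g_{k+1} - f/g_k = 1 identically in ℚ(x) for k = 1,...,n-2. Then there exist q ∈ ℚ× and x_1 ∈ {-1,...,1-n} with f(x)/g_k(x) = (x - x_k)/q where x_k = x_1 + (1-k)q for all k; moreover either (q = 1 and x_k = -k for all k) or (q = -1 and x_k = k-n for all k). -/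
/-!
Put `h k = f / g k`. The recurrence gives `h k = h 1 + (k - 1)`, so if `h 1 = F / G` in lowest
terms then `h k = (F + (k - 1) G) / G`, again in lowest terms; hence the `n - 1` polynomials
`F + (k - 1) G` divide `f`. They are pairwise coprime (two of them differ by a nonzero multiple
of `G`) and all have degree `deg F > deg G`, so `(n - 1) deg F ≤ deg f = n - 1`: `F` is linear,
`G = 1`, and `h k = (x - x_k) / q`. Each `x_k` is a root of `f`, i.e. lies in `{-1, …, 1 - n}`,
and an arithmetic progression of `n - 1` terms with nonzero integer step inside this set is the
set itself, traversed in one of the two directions.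
-/

open Polynomial

open Finset in
theorem eq_add_natCast_sub_one_of_sub_eq_one {R : Type*} [AddCommGroupWithOne R] {h : ℕ → R}
    {m : ℕ} (hrec : ∀ k ∈ Icc 1 (m - 1), h (k + 1) - h k = 1) :
    ∀ k ∈ Icc 1 m, h k = h 1 + ((k : R) - 1) := by
  intro k hk
  obtain ⟨hk1, hkm⟩ := mem_Icc.mp hk
  induction k, hk1 using Nat.le_induction with
  | base => simp
  | succ k hk1 ih =>
    rw [← sub_add_cancel (h (k + 1)) (h k), hrec k (mem_Icc.mpr ⟨hk1, by omega⟩),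
      ih (mem_Icc.mpr ⟨hk1, by omega⟩) (by omega)]
    push_cast
    abel

namespace Polynomial

variable {K : Type*} [Field K] {F G : K[X]}

theorem isCoprime_add_C_mul (hFG : IsCoprime F G) {a b : K} (hab : a ≠ b) :
    IsCoprime (F + C a * G) (F + C b * G) := by
  have hcop : IsCoprime (F + C a * G) (C (b - a) * G) :=
    (isCoprime_mul_unit_left_right (isUnit_C.mpr (sub_ne_zero.mpr hab.symm).isUnit) _ _).mpr
      (hFG.add_mul_right_left (C a))
  have hb : F + C b * G = C (b - a) * G + (F + C a * G) * 1 := by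
    rw [C_sub]
    ring
  rw [hb]
  exact hcop.add_mul_left_right 1

theorem natDegree_add_C_mul (hGF : G.natDegree < F.natDegree) (a : K) :
    (F + C a * G).natDegree = F.natDegree :=
  natDegree_add_eq_left_of_natDegree_lt ((natDegree_C_mul_le a G).trans_lt hGF)

theorem card_mul_natDegree_le_of_add_C_mul_dvd (hFG : IsCoprime F G)
    (hGF : G.natDegree < F.natDegree) {P : K[X]} (hP : P ≠ 0) (s : Finset K)
    (hdvd : ∀ a ∈ s, F + C a * G ∣ P) : s.card * F.natDegree ≤ P.natDegree := by
  have hprod : ∏ a ∈ s, (F + C a * G) ∣ P :=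
    Finset.prod_dvd_of_coprime (fun a _ b _ hab => isCoprime_add_C_mul hFG hab) hdvd
  have hne : ∀ a ∈ s, F + C a * G ≠ 0 := fun a _ h => by
    have := natDegree_add_C_mul hGF a
    rw [h, natDegree_zero] at this
    omega
  calc s.card * F.natDegree = (∏ a ∈ s, (F + C a * G)).natDegree := by
        simp [natDegree_prod _ _ hne, natDegree_add_C_mul hGF]
    _ ≤ P.natDegree := natDegree_le_of_dvd hprod hP

end Polynomial

namespace RatFunc

variable {K : Type*} [Field K]

theorem mul_eq_mul_of_algebraMap_div_eq {f g A B : K[X]} (hg : g ≠ 0) (hB : B ≠ 0)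
    (h : algebraMap K[X] (RatFunc K) f / algebraMap K[X] (RatFunc K) g
      = algebraMap K[X] (RatFunc K) A / algebraMap K[X] (RatFunc K) B) :
    f * B = g * A := by
  rw [div_eq_div_iff (algebraMap_ne_zero hg) (algebraMap_ne_zero hB), ← map_mul, ← map_mul] at h
  exact algebraMap_injective K (by rw [h, mul_comm])

theorem num_add_C_mul_denom_dvd {r : RatFunc K} {f g : K[X]} (hg : g ≠ 0) {c : K}
    (h : algebraMap K[X] (RatFunc K) f / algebraMap K[X] (RatFunc K) g = r + RatFunc.C c) :
    r.num + Polynomial.C c * r.denom ∣ f := by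
  have hr : r + RatFunc.C c = algebraMap K[X] (RatFunc K) (r.num + Polynomial.C c * r.denom)
      / algebraMap K[X] (RatFunc K) r.denom := by
    rw [map_add, map_mul, add_div, mul_div_cancel_right₀ _ (algebraMap_ne_zero (denom_ne_zero r)),
      num_div_denom, algebraMap_C]
  have hcop : IsCoprime (r.num + Polynomial.C c * r.denom) r.denom :=
    (isCoprime_num_denom r).add_mul_right_left _
  exact hcop.dvd_of_dvd_mul_right
    ⟨g, by rw [mul_eq_mul_of_algebraMap_div_eq hg (denom_ne_zero r) (h.trans hr), mul_comm]⟩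

theorem natDegree_denom_lt_natDegree_num {f g : K[X]} (hg : g ≠ 0)
    (hfg : g.natDegree < f.natDegree) :
    (algebraMap K[X] (RatFunc K) f / algebraMap K[X] (RatFunc K) g).denom.natDegree
      < (algebraMap K[X] (RatFunc K) f / algebraMap K[X] (RatFunc K) g).num.natDegree := by
  set r := algebraMap K[X] (RatFunc K) f / algebraMap K[X] (RatFunc K) g
  have hf : f ≠ 0 := ne_zero_of_natDegree_gt hfg
  have hnum : r.num ≠ 0 :=
    num_ne_zero (div_ne_zero (algebraMap_ne_zero hf) (algebraMap_ne_zero hg))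
  have hcross : r.num * g = f * r.denom := (num_mul_eq_mul_denom_iff hg).mpr rfl
  have hdeg := congrArg natDegree hcross
  rw [natDegree_mul hnum hg, natDegree_mul hf (denom_ne_zero r)] at hdeg
  omega

theorem isRoot_of_algebraMap_div_eq {f g : K[X]} (hg : g ≠ 0) {q x : K} (hq : q ≠ 0)
    (h : algebraMap K[X] (RatFunc K) f / algebraMap K[X] (RatFunc K) g
      = (RatFunc.X - RatFunc.C x) / RatFunc.C q) :
    f.IsRoot x := by
  rw [← algebraMap_X, ← algebraMap_C, ← algebraMap_C, ← map_sub] at h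
  have hcross := mul_eq_mul_of_algebraMap_div_eq hg (C_ne_zero.mpr hq) h
  simpa [hq] using congrArg (Polynomial.eval x) hcross

open Finset in
theorem exists_algebraMap_div_eq_X_sub_C_div_C [CharZero K] {f : K[X]} {g : ℕ → K[X]} {m : ℕ}
    (hm : 1 ≤ m) (hfm : f.natDegree ≤ m) (hg0 : ∀ k ∈ Icc 1 m, g k ≠ 0)
    (hg1 : (g 1).natDegree < f.natDegree)
    (hprog : ∀ k ∈ Icc 1 m, algebraMap K[X] (RatFunc K) f / algebraMap K[X] (RatFunc K) (g k)
      = algebraMap K[X] (RatFunc K) f / algebraMap K[X] (RatFunc K) (g 1) + ((k : RatFunc K) - 1)) :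
    ∃ q : K, q ≠ 0 ∧ ∃ x : K, ∀ k ∈ Icc 1 m,
      algebraMap K[X] (RatFunc K) f / algebraMap K[X] (RatFunc K) (g k)
        = (RatFunc.X - RatFunc.C (x + (1 - (k : K)) * q)) / RatFunc.C q := by
  set r := algebraMap K[X] (RatFunc K) f / algebraMap K[X] (RatFunc K) (g 1)
  have hlt : r.denom.natDegree < r.num.natDegree :=
    natDegree_denom_lt_natDegree_num (hg0 1 (left_mem_Icc.mpr hm)) hg1
  have hdvd : ∀ a ∈ (range m).map (Nat.castEmbedding : ℕ ↪ K),
      r.num + Polynomial.C a * r.denom ∣ f := by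
    simp only [mem_map, mem_range, forall_exists_index, and_imp]
    rintro _ j hj rfl
    refine num_add_C_mul_denom_dvd (hg0 (j + 1) (mem_Icc.mpr ⟨by omega, by omega⟩)) ?_
    rw [hprog (j + 1) (mem_Icc.mpr ⟨by omega, by omega⟩)]
    simp
  have hcard := card_mul_natDegree_le_of_add_C_mul_dvd (isCoprime_num_denom r) hlt
    (ne_zero_of_natDegree_gt hg1) _ hdvd
  rw [card_map, card_range] at hcard
  have hnum : r.num.natDegree = 1 := by
    have := Nat.le_of_mul_le_mul_left (hcard.trans (hfm.trans (mul_one m).ge)) hm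
    omega
  have hdenom : r.denom = 1 := (monic_denom r).natDegree_eq_zero.mp (by omega)
  obtain ⟨α, hα, β, hαβ⟩ := natDegree_eq_one.mp hnum
  refine ⟨α⁻¹, inv_ne_zero hα, -β / α, fun k hk => ?_⟩
  rw [hprog k hk, ← num_div_denom r, hdenom, ← hαβ]
  have hCα : RatFunc.C α ≠ 0 := by simpa using hα
  simp only [map_add, map_mul, algebraMap_C, algebraMap_X, div_one, map_inv₀, map_div₀, map_neg,
    map_sub, map_one, map_natCast]
  field_simp
  ring

end RatFunc

theorem exists_eq_neg_of_isRoot_prod_X_add_C {R ι : Type*} [CommRing R] [IsDomain R]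
    {s : Finset ι} {a : ι → R} {x : R} (h : (∏ j ∈ s, (X + C (a j))).IsRoot x) :
    ∃ j ∈ s, x = -a j := by
  obtain ⟨j, hj, hroot⟩ := (isRoot_prod s _ x).mp h
  exact ⟨j, hj, eq_neg_of_add_eq_zero_left (by simpa using hroot)⟩

open Finset in
theorem eq_one_and_eq_neg_one_or_eq_neg_one_and_eq_neg_natCast {K : Type*} [Field K]
    [LinearOrder K] [IsStrictOrderedRing K] {m : ℕ} (hm : 2 ≤ m) {q x : K} (hq : q ≠ 0)
    (h : ∀ k ∈ Icc 1 m, ∃ j ∈ Icc 1 m, x + (1 - (k : K)) * q = -(j : K)) :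
    (q = 1 ∧ x = -1) ∨ (q = -1 ∧ x = -(m : K)) := by
  obtain ⟨a, ha, hxa⟩ := h 1 (mem_Icc.mpr ⟨by omega, by omega⟩)
  obtain ⟨b, hb, hxb⟩ := h 2 (mem_Icc.mpr ⟨by omega, by omega⟩)
  obtain ⟨c, hc, hxc⟩ := h m (mem_Icc.mpr ⟨by omega, by omega⟩)
  simp only [mem_Icc] at ha hb hc
  have hx : x = -(a : K) := by simpa using hxa
  have hqab : q = (b : K) - a := by push_cast at hxb; linear_combination hx - hxb
  have hab : (b : ℤ) ≠ a := fun hab => hq (by rw [hqab, sub_eq_zero]; exact_mod_cast hab)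
  have hstep : ((m : ℤ) - 1) * ((b : ℤ) - a) = (c : ℤ) - a := by
    have : ((m : K) - 1) * ((b : K) - a) = (c : K) - a := by
      rw [← hqab]; linear_combination hx - hxc
    exact_mod_cast this
  have hunit : (b : ℤ) = a + 1 ∨ (b : ℤ) = a - 1 := by
    rcases lt_or_gt_of_ne hab with hlt | hlt
    · right; nlinarith
    · left; nlinarith
  rcases hunit with hb1 | hb1
  · have hcm : (c : ℤ) - a = m - 1 := by rw [hb1] at hstep; linear_combination -hstep
    have ha1 : a = 1 := by omega
    refine Or.inl ⟨?_, by rw [hx, ha1, Nat.cast_one]⟩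
    rw [hqab]
    exact_mod_cast (by omega : (b : ℤ) - a = 1)
  · have hcm : (c : ℤ) - a = 1 - m := by rw [hb1] at hstep; linear_combination -hstep
    have ham : a = m := by omega
    refine Or.inr ⟨?_, by rw [hx, ham]⟩
    rw [hqab]
    exact_mod_cast (by omega : (b : ℤ) - a = -1)

/-- let `n ≥ 3`, `f(x) = (x+1)⋯(x+n-1) ∈ ℚ[x]`, and `g_1,…,g_{n-1}`
nonzero rational polynomials of degree `≤ n-2` with `f/g_{k+1} - f/g_k = 1` in `ℚ(x)`
for `k = 1,…,n-2`. Then there are `q ∈ ℚˣ` and `x₁ ∈ {-1,…,1-n}` such that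
`f/g_k = (x - x_k)/q` with `x_k = x₁ + (1-k)q`; moreover either `q = 1` and
`x_k = -k` for all `k`, or `q = -1` and `x_k = k - n` for all `k`. -/
theorem stmt10 (n : ℕ) (hn : 3 ≤ n)
    (f : ℚ[X]) (hf : f = ∏ j ∈ Finset.Icc 1 (n - 1), (X + C (j : ℚ)))
    (g : ℕ → ℚ[X])
    (hg0 : ∀ k ∈ Finset.Icc 1 (n - 1), g k ≠ 0)
    (hgdeg : ∀ k ∈ Finset.Icc 1 (n - 1), (g k).degree ≤ (n - 2 : ℕ))
    (hrec : ∀ k ∈ Finset.Icc 1 (n - 2),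
      algebraMap ℚ[X] (RatFunc ℚ) f / algebraMap ℚ[X] (RatFunc ℚ) (g (k + 1))
        - algebraMap ℚ[X] (RatFunc ℚ) f / algebraMap ℚ[X] (RatFunc ℚ) (g k) = 1) :
    ∃ q : ℚ, q ≠ 0 ∧ ∃ x₁ : ℚ, (-(n : ℚ) + 1) ≤ x₁ ∧ x₁ ≤ -1 ∧
      (∀ k ∈ Finset.Icc 1 (n - 1),
        algebraMap ℚ[X] (RatFunc ℚ) f / algebraMap ℚ[X] (RatFunc ℚ) (g k)
          = (RatFunc.X - RatFunc.C (x₁ + (1 - (k : ℚ)) * q)) / RatFunc.C q) ∧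
      ((q = 1 ∧ ∀ k ∈ Finset.Icc 1 (n - 1), x₁ + (1 - (k : ℚ)) * q = -(k : ℚ)) ∨
       (q = -1 ∧ ∀ k ∈ Finset.Icc 1 (n - 1), x₁ + (1 - (k : ℚ)) * q = (k : ℚ) - n)) := by
  obtain ⟨m, rfl⟩ : ∃ m, n = m + 1 := ⟨n - 1, by omega⟩
  rw [show m + 1 - 2 = m - 1 by omega] at hgdeg hrec
  simp only [Nat.add_sub_cancel] at hf hg0 hgdeg ⊢
  have hfdeg : f.natDegree = m := by
    rw [hf, natDegree_prod_of_monic _ _ fun j _ => monic_X_add_C _]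
    simp only [natDegree_X_add_C, Finset.sum_const, Nat.card_Icc, smul_eq_mul, mul_one]
    omega
  have hg1 : (g 1).natDegree < f.natDegree := by
    have := natDegree_le_of_degree_le (hgdeg 1 (Finset.mem_Icc.mpr ⟨le_rfl, by omega⟩))
    omega
  obtain ⟨q, hq, x, hx⟩ := RatFunc.exists_algebraMap_div_eq_X_sub_C_div_C (by omega) hfdeg.le
    hg0 hg1 (eq_add_natCast_sub_one_of_sub_eq_one hrec)
  have hroots : ∀ k ∈ Finset.Icc 1 m, ∃ j ∈ Finset.Icc 1 m, x + (1 - (k : ℚ)) * q = -(j : ℚ) :=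
    fun k hk => exists_eq_neg_of_isRoot_prod_X_add_C
      (hf ▸ RatFunc.isRoot_of_algebraMap_div_eq (hg0 k hk) hq (hx k hk))
  have hm : (1 : ℚ) ≤ m := by exact_mod_cast (by omega : 1 ≤ m)
  refine ⟨q, hq, x, ?_⟩
  rcases eq_one_and_eq_neg_one_or_eq_neg_one_and_eq_neg_natCast (by omega) hq hroots with
    ⟨rfl, rfl⟩ | ⟨rfl, rfl⟩
  · refine ⟨by push_cast; linarith, le_rfl, hx, Or.inl ⟨rfl, fun k _ => by ring⟩⟩
  · refine ⟨by push_cast; linarith, by linarith, hx, Or.inr ⟨rfl, fun k _ => ?_⟩⟩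
    push_cast
    ring
end

section
/- Let V be a finite-dimensional complex vector space, G a finite group acting linearly on V, and ( , ) a G-invariant bilinear form on V. For u, v ∈ V define L_u : V → ℂ by L_u(x) = Σ_{g∈G} e^{(u,gx)}. If the form is symplectic (alternating, nondegenerate) and we use the induced Poisson bracket on functions, then {L_u, L_v}(x) = Σ_{g∈G} (u, gv) L_{u+gv}(x) for all u,v,x ∈ V. -/
/-!
Differentiating `L_u = Σ_g exp (u, g·)` and moving `g` across the invariant form gives
`dL_u(x) = (X_u(x), ·)` with `X_u(x) = Σ_g e^{(u,gx)} g⁻¹u`, so `{L_u, L_v}(x) = (X_u(x), X_v(x))`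
whatever the choice of `J`. Expanding this double sum over `(g, h)` and regrouping along
`k = g h⁻¹` turns `(g⁻¹u, h⁻¹v) = (u, kv)` and `e^{(v,hx)} = e^{(kv,gx)}` into the right-hand side.
-/

open Finset Complex

section Invariant

variable {R M G : Type*} [CommRing R] [AddCommGroup M] [Module R M] [Group G]
  {ω : M →ₗ[R] M →ₗ[R] R} {ρ : G →* (M ≃ₗ[R] M)}

theorem map_mul_apply (g h : G) (a : M) : ρ (g * h) a = ρ g (ρ h a) := by
  rw [map_mul, LinearEquiv.mul_apply]

theorem map_inv_map_apply (g : G) (a : M) : ρ g⁻¹ (ρ g a) = a := by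
  rw [← map_mul_apply, inv_mul_cancel, map_one]
  rfl

theorem map_map_inv_apply (g : G) (a : M) : ρ g (ρ g⁻¹ a) = a := by
  rw [← map_mul_apply, mul_inv_cancel, map_one]
  rfl

theorem apply_map_eq_map_inv_apply (hinv : ∀ g u v, ω (ρ g u) (ρ g v) = ω u v) (g : G) (a b : M) :
    ω a (ρ g b) = ω (ρ g⁻¹ a) b := by
  rw [← hinv g⁻¹, map_inv_map_apply]

end Invariant

theorem LinearMap.IsAlt.apply_sharp_sharp {R M : Type*} [CommRing R] [TopologicalSpace R]
    [AddCommGroup M] [Module R M] [TopologicalSpace M] {ω : M →ₗ[R] M →ₗ[R] R} (hω : ω.IsAlt)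
    {J : (M →L[R] R) → M} (hJ : ∀ (α : M →L[R] R) (v : M), ω (J α) v = α v)
    {α β : M →L[R] R} {a b : M} (ha : ∀ y, α y = ω a y) (hb : ∀ y, β y = ω b y) :
    ω (J α) (J β) = ω a b := by
  rw [hJ, ha, ← hω.neg, hJ, hb, hω.neg]

section OrbitExpSum

variable {V G : Type*} [NormedAddCommGroup V] [NormedSpace ℂ V] [Group G] [Fintype G]

noncomputable def orbitExpSum (ω : V →ₗ[ℂ] V →ₗ[ℂ] ℂ) (ρ : G →* (V ≃ₗ[ℂ] V)) (u x : V) : ℂ :=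
  ∑ g, exp (ω u (ρ g x))

noncomputable def hamiltonianVector (ω : V →ₗ[ℂ] V →ₗ[ℂ] ℂ) (ρ : G →* (V ≃ₗ[ℂ] V)) (u x : V) : V :=
  ∑ g, exp (ω u (ρ g x)) • ρ g⁻¹ u

variable {ω : V →ₗ[ℂ] V →ₗ[ℂ] ℂ} {ρ : G →* (V ≃ₗ[ℂ] V)}

theorem hasFDerivAt_orbitExpSum [FiniteDimensional ℂ V] (u x : V) :
    HasFDerivAt (orbitExpSum ω ρ u)
      (∑ g, exp (ω u (ρ g x)) • LinearMap.toContinuousLinearMap (ω u ∘ₗ (ρ g).toLinearMap)) x :=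
  HasFDerivAt.fun_sum fun g _ =>
    (LinearMap.toContinuousLinearMap (ω u ∘ₗ (ρ g).toLinearMap)).hasFDerivAt.cexp

theorem fderiv_orbitExpSum_apply [FiniteDimensional ℂ V]
    (hinv : ∀ g u v, ω (ρ g u) (ρ g v) = ω u v) (u x y : V) :
    fderiv ℂ (orbitExpSum ω ρ u) x y = ω (hamiltonianVector ω ρ u x) y := by
  simp [(hasFDerivAt_orbitExpSum u x).fderiv, hamiltonianVector, apply_map_eq_map_inv_apply hinv]

theorem apply_hamiltonianVector (hinv : ∀ g u v, ω (ρ g u) (ρ g v) = ω u v) (u v x : V) :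
    ω (hamiltonianVector ω ρ u x) (hamiltonianVector ω ρ v x)
      = ∑ k, ω u (ρ k v) * orbitExpSum ω ρ (u + ρ k v) x := by
  have hpair : ∀ g h : G, ω (ρ g⁻¹ u) (ρ h⁻¹ v) = ω u (ρ (g * h⁻¹) v) := by
    intro g h
    rw [← hinv g, map_map_inv_apply, map_mul_apply]
  have hexp : ∀ g h : G, ω (ρ (g * h⁻¹) v) (ρ g x) = ω v (ρ h x) := by
    intro g h
    rw [map_mul_apply, hinv, apply_map_eq_map_inv_apply hinv h]
  simp only [hamiltonianVector, map_sum, map_smul, LinearMap.sum_apply, LinearMap.smul_apply,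
    smul_eq_mul, hpair, orbitExpSum, map_add, LinearMap.add_apply, exp_add, mul_sum]
  rw [sum_comm]
  conv_rhs => rw [sum_comm]
  refine sum_congr rfl fun g _ => ?_
  refine Fintype.sum_equiv ((Equiv.inv G).trans (Equiv.mulLeft g)) _ _ fun h => ?_
  simp only [Equiv.trans_apply, Equiv.inv_apply, Equiv.coe_mulLeft, hexp]
  ring

end OrbitExpSum

theorem stmt16_general (V : Type*) [NormedAddCommGroup V] [NormedSpace ℂ V]
    [FiniteDimensional ℂ V]
    (ω : V →ₗ[ℂ] V →ₗ[ℂ] ℂ) (halt : ∀ v, ω v v = 0)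
    (G : Type*) [Group G] [Fintype G] (ρ : G →* (V ≃ₗ[ℂ] V))
    (hinv : ∀ g u v, ω (ρ g u) (ρ g v) = ω u v)
    (J : (V →L[ℂ] ℂ) → V) (hJ : ∀ (α : V →L[ℂ] ℂ) (v : V), ω (J α) v = α v)
    (L : V → V → ℂ) (hL : ∀ u x, L u x = ∑ g : G, Complex.exp (ω u (ρ g x)))
    (Pb : (V → ℂ) → (V → ℂ) → V → ℂ)
    (hPb : ∀ (F₁ F₂ : V → ℂ) (x : V),
      Pb F₁ F₂ x = ω (J (fderiv ℂ F₁ x)) (J (fderiv ℂ F₂ x))) :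
    ∀ u v x : V, Pb (L u) (L v) x = ∑ g : G, ω u (ρ g v) * L (u + ρ g v) x := by
  obtain rfl : L = orbitExpSum ω ρ := funext₂ hL
  intro u v x
  rw [hPb, LinearMap.IsAlt.apply_sharp_sharp halt hJ (fderiv_orbitExpSum_apply hinv u x)
    (fderiv_orbitExpSum_apply hinv v x), apply_hamiltonianVector hinv]

/-- let `V` be a finite-dimensional complex symplectic vector space,
`G ⊂ Sp(V)` finite, and `L_u(x) = Σ_{g∈G} e^{(u,gx)}`. With the Poisson bracket of
smooth functions induced by the symplectic form (via the musical isomorphism `J`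
inverse to `α ↦ ω(·,—)`), one has `{L_u, L_v}(x) = Σ_{g∈G} (u,gv) L_{u+gv}(x)`. -/
theorem stmt16 (V : Type*) [NormedAddCommGroup V] [NormedSpace ℂ V]
    [FiniteDimensional ℂ V]
    (ω : V →ₗ[ℂ] V →ₗ[ℂ] ℂ) (halt : ∀ v, ω v v = 0)
    (hnd : ∀ u : V, (∀ v : V, ω u v = 0) → u = 0)
    (G : Type*) [Group G] [Fintype G] (ρ : G →* (V ≃ₗ[ℂ] V))
    (hinv : ∀ g u v, ω (ρ g u) (ρ g v) = ω u v)
    (J : (V →L[ℂ] ℂ) → V) (hJ : ∀ (α : V →L[ℂ] ℂ) (v : V), ω (J α) v = α v)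
    (L : V → V → ℂ) (hL : ∀ u x, L u x = ∑ g : G, Complex.exp (ω u (ρ g x)))
    (Pb : (V → ℂ) → (V → ℂ) → V → ℂ)
    (hPb : ∀ (F₁ F₂ : V → ℂ) (x : V),
      Pb F₁ F₂ x = ω (J (fderiv ℂ F₁ x)) (J (fderiv ℂ F₂ x))) :
    ∀ u v x : V, Pb (L u) (L v) x = ∑ g : G, ω u (ρ g v) * L (u + ρ g v) x :=
  stmt16_general V ω halt G ρ hinv J hJ L hL Pb hPb
end
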